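/- If the polynomial F := Σᵢ (aᵢ, f(aᵢ)) xⁱ is Gaussian over A ⋈^f J, then the polynomial g := Σᵢ aᵢ xⁱ is Gaussian over A. -/

import Mathlib

variable {A B : Type*} [CommRing A] [CommRing B]

/-- The amalgamation `A ⋈^f J` of `A` and `B` along the ideal `J` with respect to `f`,
as a subring of `A × B`. -/
def amalg (f : A →+* B) (J : Ideal B) : Subring (A × B) where
  carrier := {p | ∃ a, ∃ j ∈ J, p = (a, f a + j)}
  zero_mem' := ⟨0, 0, J.zero_mem, by simp [Prod.ext_iff]⟩
  one_mem' := ⟨1, 0, J.zero_mem, by simp [Prod.ext_iff]⟩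
  add_mem' := by
    rintro _ _ ⟨a, j, hj, rfl⟩ ⟨a', j', hj', rfl⟩
    exact ⟨a + a', j + j', J.add_mem hj hj', by simp [Prod.ext_iff]; ring⟩
  neg_mem' := by
    rintro _ ⟨a, j, hj, rfl⟩
    exact ⟨-a, -j, J.neg_mem hj, by simp [Prod.ext_iff]; ring⟩
  mul_mem' := by
    rintro _ _ ⟨a, j, hj, rfl⟩ ⟨a', j', hj', rfl⟩
    exact ⟨a * a', f a * j' + j * f a' + j * j',
      J.add_mem (J.add_mem (J.mul_mem_left _ hj') (J.mul_mem_right _ hj)) (J.mul_mem_right _ hj),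
      by simp [Prod.ext_iff]; ring⟩

/-- The set of zero-divisors of a ring. -/
def zdSet (R : Type*) [CommRing R] : Set R := {a | ∃ b, b ≠ 0 ∧ a * b = 0}

/-- The content ideal of a polynomial: the ideal generated by its coefficients. -/
def contentIdeal {R : Type*} [CommRing R] (p : Polynomial R) : Ideal R :=
  Ideal.span (Set.range p.coeff)

/-- A polynomial is Gaussian if `c(ph) = c(p) c(h)` for every polynomial `h`. -/
def IsGaussianPoly {R : Type*} [CommRing R] (p : Polynomial R) : Prop :=
  ∀ h : Polynomial R, contentIdeal (p * h) = contentIdeal p * contentIdeal h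

/-- A Gaussian ring. -/
def IsGaussianRing (R : Type*) [CommRing R] : Prop :=
  ∀ p q : Polynomial R, contentIdeal (p * q) = contentIdeal p * contentIdeal q

/-- A Prüfer ring: every finitely generated regular ideal is invertible
(in the total ring of quotients). -/
def IsPruferRing (R : Type*) [CommRing R] : Prop :=
  ∀ I : Ideal R, I.FG → (∃ r ∈ I, r ∈ nonZeroDivisors R) →
    ∃ T : FractionalIdeal (nonZeroDivisors R) (FractionRing R),
      (I : FractionalIdeal (nonZeroDivisors R) (FractionRing R)) * T = 1

/-- The canonical ring homomorphism `A → A ⋈^f J`, `a ↦ (a, f a)`. -/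
def amalgInl (f : A →+* B) (J : Ideal B) : A →+* ↥(amalg f J) where
  toFun a := ⟨(a, f a), a, 0, J.zero_mem, by simp⟩
  map_one' := by apply Subtype.ext; simp
  map_mul' x y := by apply Subtype.ext; simp
  map_zero' := by apply Subtype.ext; simp
  map_add' x y := by apply Subtype.ext; simp

/-! Restricting to first coordinates is a ring retraction `A ⋈^f J → A` of `amalgInl f J`, and
Gaussian polynomials are carried to Gaussian polynomials by surjective ring homomorphisms, since
content commutes with base change and every polynomial over the target lifts. -/

theorem contentIdeal_map {R S : Type*} [CommRing R] [CommRing S] (φ : R →+* S)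
    (p : Polynomial R) : contentIdeal (p.map φ) = Ideal.map φ (contentIdeal p) := by
  rw [contentIdeal, contentIdeal, Ideal.map_span, ← Set.range_comp]
  exact congrArg (Ideal.span ∘ Set.range) (funext (Polynomial.coeff_map φ))

theorem IsGaussianPoly.map_of_surjective {R S : Type*} [CommRing R] [CommRing S] {φ : R →+* S}
    (hφ : Function.Surjective φ) {p : Polynomial R} (hp : IsGaussianPoly p) :
    IsGaussianPoly (p.map φ) := by
  intro h
  obtain ⟨h, rfl⟩ := Polynomial.map_surjective φ hφ h
  rw [← Polynomial.map_mul, contentIdeal_map, contentIdeal_map, contentIdeal_map, hp h,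
    Ideal.map_mul]

def amalgFst (f : A →+* B) (J : Ideal B) : ↥(amalg f J) →+* A :=
  (RingHom.fst A B).comp (amalg f J).subtype

theorem amalgFst_comp_amalgInl (f : A →+* B) (J : Ideal B) :
    (amalgFst f J).comp (amalgInl f J) = RingHom.id A :=
  rfl

theorem amalgFst_surjective (f : A →+* B) (J : Ideal B) : Function.Surjective (amalgFst f J) :=
  fun a => ⟨amalgInl f J a, rfl⟩

theorem gaussian_of_gaussian_amalg_general (f : A →+* B) (J : Ideal B)
    (p : Polynomial A) (hF : IsGaussianPoly (p.map (amalgInl f J))) :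
    IsGaussianPoly p := by
  have h := hF.map_of_surjective (amalgFst_surjective f J)
  rwa [Polynomial.map_map, amalgFst_comp_amalgInl, Polynomial.map_id] at h

/-- If `F := Σ (aᵢ, f(aᵢ)) xⁱ` is Gaussian over `A ⋈^f J`, then `Σ aᵢ xⁱ` is Gaussian over `A`. -/
theorem gaussian_of_gaussian_amalg (f : A →+* B) (J : Ideal B) (hJ : J ≠ ⊤)
    (p : Polynomial A) (hF : IsGaussianPoly (p.map (amalgInl f J))) :
    IsGaussianPoly p :=
  gaussian_of_gaussian_amalg_general f J p hF
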